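/- For any symmetric g × g integer matrix M, the set of matrices of the form [[A, (1/2)(M - A M Aᵀ)(Aᵀ)⁻¹],[0, (Aᵀ)⁻¹]] with A ∈ GL(g, ℤ) and A M Aᵀ ≡ M (mod 2) is a subgroup of the symplectic group Sp(2g, ℤ). -/

import Mathlib

open Matrix

private lemma congMap {g : ℕ} (X Y : Matrix (Fin g) (Fin g) ℤ) :
    (∀ i j, X i j ≡ Y i j [ZMOD 2]) ↔
      X.map (Int.castRingHom (ZMod 2)) = Y.map (Int.castRingHom (ZMod 2)) := by
  constructor
  · intro h
    ext i j
    simpa [Matrix.map_apply, ZMod.intCast_eq_intCast_iff] using h i j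
  · intro h i j
    have := congrFun (congrFun h i) j
    simpa [Matrix.map_apply, ZMod.intCast_eq_intCast_iff] using this

private lemma symm_BA {g : ℕ} {M A B : Matrix (Fin g) (Fin g) ℤ} (hM : M.IsSymm)
    (hB : (2 : ℤ) • B * Aᵀ = M - A * M * Aᵀ) : B * Aᵀ = A * Bᵀ := by
  have hL : (2:ℤ) • (B * Aᵀ) = M - A * M * Aᵀ := by rw [← smul_mul_assoc, hB]
  have hR : (2:ℤ) • (A * Bᵀ) = M - A * M * Aᵀ := by
    have := congrArg Matrix.transpose hL
    simp only [Matrix.transpose_smul, Matrix.transpose_sub, Matrix.transpose_mul,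
      Matrix.transpose_transpose, hM.eq, ← Matrix.mul_assoc] at this
    exact this
  exact smul_right_injective (Matrix (Fin g) (Fin g) ℤ) (two_ne_zero) (hL.trans hR.symm)

private lemma mem_sympl {g : ℕ} {M A B : Matrix (Fin g) (Fin g) ℤ} (hM : M.IsSymm)
    (hA : IsUnit A.det) (hB : (2 : ℤ) • B * Aᵀ = M - A * M * Aᵀ) :
    Matrix.fromBlocks A B 0 (Aᵀ)⁻¹ ∈ Matrix.symplecticGroup (Fin g) ℤ := by
  have hAT : IsUnit Aᵀ.det := by rwa [Matrix.det_transpose]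
  have hBA : B * Aᵀ = A * Bᵀ := symm_BA hM hB
  have hDT : ((Aᵀ)⁻¹)ᵀ = A⁻¹ := by
    rw [← Matrix.transpose_nonsing_inv, Matrix.transpose_transpose]
  rw [SymplecticGroup.mem_iff, Matrix.J, Matrix.fromBlocks_transpose,
    Matrix.fromBlocks_multiply, Matrix.fromBlocks_multiply]
  refine Matrix.fromBlocks_inj.mpr ⟨?_, ?_, ?_, ?_⟩
  · simp [hBA]
  · simp [hDT, Matrix.mul_nonsing_inv A hA]
  · simp [Matrix.nonsing_inv_mul Aᵀ hAT]
  · simp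

theorem stmt3 (g : ℕ) (hg : 1 ≤ g)
    (M : Matrix (Fin g) (Fin g) ℤ) (hM : M.IsSymm)
    (S : Set (Matrix (Fin g ⊕ Fin g) (Fin g ⊕ Fin g) ℤ))
    (hS : S = {G | ∃ A B : Matrix (Fin g) (Fin g) ℤ, IsUnit A.det ∧
      (∀ i j, (A * M * Aᵀ) i j ≡ M i j [ZMOD 2]) ∧
      (2 : ℤ) • B * Aᵀ = M - A * M * Aᵀ ∧
      G = Matrix.fromBlocks A B 0 (Aᵀ)⁻¹}) :
    S ⊆ (Matrix.symplecticGroup (Fin g) ℤ : Set (Matrix (Fin g ⊕ Fin g) (Fin g ⊕ Fin g) ℤ)) ∧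
    (1 : Matrix (Fin g ⊕ Fin g) (Fin g ⊕ Fin g) ℤ) ∈ S ∧
    (∀ G₁ ∈ S, ∀ G₂ ∈ S, G₁ * G₂ ∈ S) ∧
    (∀ G ∈ S, ∃ G' ∈ S, G * G' = 1 ∧ G' * G = 1) := by
  subst hS
  refine ⟨?_, ?_, ?_, ?_⟩
  · rintro G ⟨A, B, hA, hcong, hB, rfl⟩
    exact mem_sympl hM hA hB
  · exact ⟨1, 0, by simp, by simp, by simp, by simp [← Matrix.fromBlocks_one]⟩
  · rintro G₁ ⟨A₁, B₁, hA₁, hc₁, hB₁, rfl⟩ G₂ ⟨A₂, B₂, hA₂, hc₂, hB₂, rfl⟩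
    refine ⟨A₁ * A₂, A₁ * B₂ + B₁ * (A₂ᵀ)⁻¹,
      by rw [Matrix.det_mul]; exact hA₁.mul hA₂, ?_, ?_, ?_⟩
    · rw [congMap] at hc₁ hc₂ ⊢
      have : (A₁ * A₂) * M * (A₁ * A₂)ᵀ = A₁ * (A₂ * M * A₂ᵀ) * A₁ᵀ := by
        rw [Matrix.transpose_mul]; noncomm_ring
      rw [this, Matrix.map_mul, Matrix.map_mul, hc₂, ← Matrix.map_mul, ← Matrix.map_mul]
      exact hc₁
    · have h2 : (A₂ᵀ)⁻¹ * A₂ᵀ = 1 := Matrix.nonsing_inv_mul _ (by rwa [Matrix.det_transpose])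
      have expand : ((2:ℤ) • (A₁ * B₂ + B₁ * (A₂ᵀ)⁻¹)) * (A₁ * A₂)ᵀ
          = A₁ * (((2:ℤ) • B₂) * A₂ᵀ) * A₁ᵀ + (((2:ℤ) • B₁) * A₁ᵀ) := by
        rw [Matrix.transpose_mul]
        simp only [smul_mul_assoc, mul_smul_comm, Matrix.add_mul, smul_add]
        congr 1
        · congr 1
          noncomm_ring
        · congr 1
          rw [Matrix.mul_assoc B₁, ← Matrix.mul_assoc (A₂ᵀ)⁻¹ A₂ᵀ A₁ᵀ, h2, Matrix.one_mul]
      rw [show (2:ℤ) • (A₁ * B₂ + B₁ * (A₂ᵀ)⁻¹) * (A₁ * A₂)ᵀ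
            = ((2:ℤ) • (A₁ * B₂ + B₁ * (A₂ᵀ)⁻¹)) * (A₁ * A₂)ᵀ from rfl,
        expand, hB₁, hB₂, Matrix.transpose_mul]
      noncomm_ring
    · rw [Matrix.fromBlocks_multiply]
      refine Matrix.fromBlocks_inj.mpr ⟨by simp, by simp, by simp, ?_⟩
      simp [Matrix.transpose_mul, Matrix.mul_inv_rev]
  · rintro G ⟨A, B, hA, hcong, hB, rfl⟩
    have hAT : IsUnit Aᵀ.det := by rwa [Matrix.det_transpose]
    have hAAinv : A * A⁻¹ = 1 := Matrix.mul_nonsing_inv A hA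
    have hAinvA : A⁻¹ * A = 1 := Matrix.nonsing_inv_mul A hA
    have hAinv : IsUnit (A⁻¹).det :=
      IsUnit.of_mul_eq_one _ (by rw [← Matrix.det_mul, hAinvA, Matrix.det_one])
    have hATinv : (A⁻¹)ᵀ = (Aᵀ)⁻¹ := Matrix.transpose_nonsing_inv A
    have hATiAT : (Aᵀ)⁻¹ * Aᵀ = 1 := Matrix.nonsing_inv_mul Aᵀ hAT
    have hATAT : Aᵀ * (Aᵀ)⁻¹ = 1 := Matrix.mul_nonsing_inv Aᵀ hAT
    have hDDinv : ((A⁻¹)ᵀ)⁻¹ = Aᵀ := by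
      rw [hATinv, Matrix.nonsing_inv_nonsing_inv Aᵀ hAT]
    refine ⟨Matrix.fromBlocks A⁻¹ (-(A⁻¹ * B * Aᵀ)) 0 ((A⁻¹)ᵀ)⁻¹,
      ⟨A⁻¹, -(A⁻¹ * B * Aᵀ), hAinv, ?_, ?_, rfl⟩, ?_, ?_⟩
    · rw [congMap] at hcong ⊢
      have key : A⁻¹ * (A * M * Aᵀ) * (A⁻¹)ᵀ = M := by
        rw [hATinv, ← Matrix.mul_assoc, ← Matrix.mul_assoc, hAinvA, Matrix.one_mul,
          Matrix.mul_assoc, hATAT, Matrix.mul_one]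
      calc (A⁻¹ * M * (A⁻¹)ᵀ).map (Int.castRingHom (ZMod 2))
          = ((A⁻¹).map (Int.castRingHom (ZMod 2))) * (M.map (Int.castRingHom (ZMod 2)))
              * (((A⁻¹)ᵀ).map (Int.castRingHom (ZMod 2))) := by
            rw [Matrix.map_mul, Matrix.map_mul]
        _ = ((A⁻¹).map (Int.castRingHom (ZMod 2)))
              * ((A * M * Aᵀ).map (Int.castRingHom (ZMod 2)))
              * (((A⁻¹)ᵀ).map (Int.castRingHom (ZMod 2))) := by rw [hcong]
        _ = (A⁻¹ * (A * M * Aᵀ) * (A⁻¹)ᵀ).map (Int.castRingHom (ZMod 2)) := by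
            simp only [Matrix.map_mul]
        _ = M.map (Int.castRingHom (ZMod 2)) := by rw [key]
    · rw [hATinv]
      have key : (2:ℤ) • (A⁻¹ * B) = A⁻¹ * M * (Aᵀ)⁻¹ - M := by
        have h1 : A⁻¹ * (((2:ℤ) • B) * Aᵀ) * (Aᵀ)⁻¹ = (2:ℤ) • (A⁻¹ * B) := by
          rw [smul_mul_assoc, mul_smul_comm, smul_mul_assoc]
          congr 1
          rw [Matrix.mul_assoc, Matrix.mul_assoc, hATAT, Matrix.mul_one]
        have h2 : A⁻¹ * (M - A * M * Aᵀ) * (Aᵀ)⁻¹ = A⁻¹ * M * (Aᵀ)⁻¹ - M := by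
          rw [Matrix.mul_sub, Matrix.sub_mul]
          congr 1
          rw [← Matrix.mul_assoc, ← Matrix.mul_assoc, hAinvA, Matrix.one_mul,
            Matrix.mul_assoc, hATAT, Matrix.mul_one]
        rw [← h1, show ((2:ℤ) • B) * Aᵀ = (2:ℤ) • B * Aᵀ from rfl, hB, h2]
      have lhs : ((2:ℤ) • (-(A⁻¹ * B * Aᵀ))) * (Aᵀ)⁻¹ = -((2:ℤ) • (A⁻¹ * B)) := by
        rw [smul_mul_assoc, Matrix.neg_mul, smul_neg]
        congr 2
        rw [Matrix.mul_assoc, hATAT, Matrix.mul_one]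
      rw [show (2:ℤ) • (-(A⁻¹ * B * Aᵀ)) * (Aᵀ)⁻¹
            = ((2:ℤ) • (-(A⁻¹ * B * Aᵀ))) * (Aᵀ)⁻¹ from rfl, lhs, key, neg_sub]
    · rw [Matrix.fromBlocks_multiply, hDDinv, ← Matrix.fromBlocks_one]
      refine Matrix.fromBlocks_inj.mpr ⟨by simp [hAAinv], ?_, by simp, by simp [hATiAT]⟩
      have h3 : A * -(A⁻¹ * B * Aᵀ) = -(B * Aᵀ) := by
        rw [Matrix.mul_neg, ← Matrix.mul_assoc, ← Matrix.mul_assoc, hAAinv, Matrix.one_mul]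
      simp [h3]
    · rw [Matrix.fromBlocks_multiply, hDDinv, ← Matrix.fromBlocks_one]
      refine Matrix.fromBlocks_inj.mpr ⟨by simp [hAinvA], ?_, by simp, by simp [hATAT]⟩
      have h4 : -(A⁻¹ * B * Aᵀ) * (Aᵀ)⁻¹ = -(A⁻¹ * B) := by
        rw [Matrix.neg_mul, Matrix.mul_assoc, hATAT, Matrix.mul_one]
      simp [h4]
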